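/- Under the hypotheses of the homogeneous uniqueness result (Q_ε ≥ 0, S_ε > 0, Q̃ ≥ 0, ε > 0), any solution (z₁,p₁) of the BVP dz₁/dt = C_ε z₁ + Q_ε p₁, dp₁/dt = −C_ε' p₁ + S_ε z₁, z₁(T)+p₁(T)=0, p₁(t₀)=εQ̃ z₁(t₀) satisfies the energy identity −⟨z₁(T), z₁(T)⟩ − ε⟨Q̃ z₁(t₀), z₁(t₀)⟩ = ∫_{t₀}^{T} [⟨Q_ε p₁, p₁⟩ + ⟨S_ε z₁, z₁⟩] dt. -/

import Mathlib

/-!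
Along the Hamiltonian system the cross term `t ↦ ⟨p₁ t, z₁ t⟩` has derivative
`⟨Q_ε p₁, p₁⟩ + ⟨S_ε z₁, z₁⟩`: the contributions of `C_ε` and `−C_εᵀ` cancel. Integrating
over `[t₀, T]` and inserting the boundary conditions `p₁ T = −z₁ T`, `p₁ t₀ = ε Q̃ z₁ t₀`
gives the identity.
-/

open Matrix

section Continuity

variable {α R m n : Type*} [TopologicalSpace α] [TopologicalSpace R] {s : Set α}

theorem ContinuousOn.matrix_mulVec [Fintype n] [NonUnitalNonAssocSemiring R] [ContinuousAdd R]
    [ContinuousMul R] {A : α → Matrix m n R} {v : α → n → R}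
    (hA : ContinuousOn A s) (hv : ContinuousOn v s) : ContinuousOn (fun t => A t *ᵥ v t) s := by
  rw [continuousOn_iff_continuous_domRestrict] at *
  exact hA.matrix_mulVec hv

theorem ContinuousOn.dotProduct [Fintype n] [Mul R] [AddCommMonoid R] [ContinuousAdd R]
    [ContinuousMul R] {v w : α → n → R}
    (hv : ContinuousOn v s) (hw : ContinuousOn w s) : ContinuousOn (fun t => v t ⬝ᵥ w t) s := by
  rw [continuousOn_iff_continuous_domRestrict] at *
  exact hv.dotProduct hw

end Continuity

theorem HasDerivAt.dotProduct {𝕜 ι : Type*} [NontriviallyNormedField 𝕜] [Fintype ι]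
    {f g : 𝕜 → ι → 𝕜} {f' g' : ι → 𝕜} {x : 𝕜}
    (hf : HasDerivAt f f' x) (hg : HasDerivAt g g' x) :
    HasDerivAt (fun t => f t ⬝ᵥ g t) (f' ⬝ᵥ g x + f x ⬝ᵥ g') x := by
  simp only [_root_.dotProduct, ← Finset.sum_add_distrib]
  exact HasDerivAt.fun_sum fun i _ => (hasDerivAt_pi.1 hf i).mul (hasDerivAt_pi.1 hg i)

theorem hamiltonian_dotProduct_flux {R n : Type*} [CommRing R] [Fintype n]
    (C Q S : Matrix n n R) (z p : n → R) :
    (-(Cᵀ *ᵥ p) + S *ᵥ z) ⬝ᵥ z + p ⬝ᵥ (C *ᵥ z + Q *ᵥ p) = Q *ᵥ p ⬝ᵥ p + S *ᵥ z ⬝ᵥ z := by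
  rw [add_dotProduct, neg_dotProduct, dotProduct_add, mulVec_transpose, ← dotProduct_mulVec,
    dotProduct_comm p (Q *ᵥ p)]
  ring

theorem integral_hamiltonian_energy {r : ℕ} {a b : ℝ} (hab : a ≤ b)
    {C Q S : ℝ → Matrix (Fin r) (Fin r) ℝ}
    (hQ : ContinuousOn Q (Set.Icc a b)) (hS : ContinuousOn S (Set.Icc a b))
    {z p : ℝ → Fin r → ℝ}
    (hz : ∀ t ∈ Set.Icc a b, HasDerivAt z (C t *ᵥ z t + Q t *ᵥ p t) t)
    (hp : ∀ t ∈ Set.Icc a b, HasDerivAt p (-((C t)ᵀ *ᵥ p t) + S t *ᵥ z t) t) :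
    ∫ t in a..b, (Q t *ᵥ p t ⬝ᵥ p t + S t *ᵥ z t ⬝ᵥ z t) = p b ⬝ᵥ z b - p a ⬝ᵥ z a := by
  have hzc : ContinuousOn z (Set.Icc a b) := fun t ht => (hz t ht).continuousAt.continuousWithinAt
  have hpc : ContinuousOn p (Set.Icc a b) := fun t ht => (hp t ht).continuousAt.continuousWithinAt
  have hflux : ContinuousOn (fun t => Q t *ᵥ p t ⬝ᵥ p t + S t *ᵥ z t ⬝ᵥ z t) (Set.Icc a b) :=
    ((hQ.matrix_mulVec hpc).dotProduct hpc).add ((hS.matrix_mulVec hzc).dotProduct hzc)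
  rw [← Set.uIcc_of_le hab] at hz hp hflux
  refine intervalIntegral.integral_eq_sub_of_hasDerivAt (f := fun t => p t ⬝ᵥ z t)
    (fun t ht => ?_) hflux.intervalIntegrable
  rw [← hamiltonian_dotProduct_flux (C t)]
  exact (hp t ht).dotProduct (hz t ht)

theorem stmt5_general {r : ℕ} (t₀ T : ℝ) (hT : t₀ < T) (ε : ℝ)
    (Cε Qε Sε : ℝ → Matrix (Fin r) (Fin r) ℝ)
    (hQc : ContinuousOn Qε (Set.Icc t₀ T))
    (hSc : ContinuousOn Sε (Set.Icc t₀ T))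
    (Qt : Matrix (Fin r) (Fin r) ℝ)
    (z₁ p₁ : ℝ → Fin r → ℝ)
    (hz : ∀ t ∈ Set.Icc t₀ T,
      HasDerivAt z₁ ((Cε t).mulVec (z₁ t) + (Qε t).mulVec (p₁ t)) t)
    (hp : ∀ t ∈ Set.Icc t₀ T,
      HasDerivAt p₁ (-((Cε t)ᵀ.mulVec (p₁ t)) + (Sε t).mulVec (z₁ t)) t)
    (hbT : z₁ T + p₁ T = 0)
    (hb0 : p₁ t₀ = ε • Qt.mulVec (z₁ t₀)) :
    -(z₁ T ⬝ᵥ z₁ T) - ε * (Qt.mulVec (z₁ t₀) ⬝ᵥ z₁ t₀)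
      = ∫ t in t₀..T, ((Qε t).mulVec (p₁ t) ⬝ᵥ p₁ t + (Sε t).mulVec (z₁ t) ⬝ᵥ z₁ t) := by
  have hpT : p₁ T = -z₁ T := eq_neg_of_add_eq_zero_right hbT
  rw [integral_hamiltonian_energy hT.le hQc hSc hz hp, hpT, hb0, neg_dotProduct, smul_dotProduct,
    smul_eq_mul]

/-- energy identity for solutions of the homogeneous BVP
`dz₁/dt = C_ε z₁ + Q_ε p₁`, `dp₁/dt = −C_ε' p₁ + S_ε z₁`, `z₁(T)+p₁(T)=0`,
`p₁(t₀)=εQ̃z₁(t₀)`: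
`−⟨z₁(T),z₁(T)⟩ − ε⟨Q̃z₁(t₀),z₁(t₀)⟩ = ∫ ⟨Q_ε p₁,p₁⟩ + ⟨S_ε z₁,z₁⟩ dt`. -/
theorem stmt5 {r : ℕ} (t₀ T : ℝ) (hT : t₀ < T) (ε : ℝ) (hε : 0 < ε)
    (Cε Qε Sε : ℝ → Matrix (Fin r) (Fin r) ℝ)
    (hCc : ContinuousOn Cε (Set.Icc t₀ T))
    (hQc : ContinuousOn Qε (Set.Icc t₀ T))
    (hSc : ContinuousOn Sε (Set.Icc t₀ T))
    (hQpsd : ∀ t ∈ Set.Icc t₀ T, (Qε t).PosSemidef)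
    (hSpd : ∀ t ∈ Set.Icc t₀ T, (Sε t).PosDef)
    (Qt : Matrix (Fin r) (Fin r) ℝ) (hQt : Qt.PosSemidef)
    (z₁ p₁ : ℝ → Fin r → ℝ)
    (hz : ∀ t ∈ Set.Icc t₀ T,
      HasDerivAt z₁ ((Cε t).mulVec (z₁ t) + (Qε t).mulVec (p₁ t)) t)
    (hp : ∀ t ∈ Set.Icc t₀ T,
      HasDerivAt p₁ (-((Cε t)ᵀ.mulVec (p₁ t)) + (Sε t).mulVec (z₁ t)) t)
    (hbT : z₁ T + p₁ T = 0)
    (hb0 : p₁ t₀ = ε • Qt.mulVec (z₁ t₀)) :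
    -(z₁ T ⬝ᵥ z₁ T) - ε * (Qt.mulVec (z₁ t₀) ⬝ᵥ z₁ t₀)
      = ∫ t in t₀..T, ((Qε t).mulVec (p₁ t) ⬝ᵥ p₁ t + (Sε t).mulVec (z₁ t) ⬝ᵥ z₁ t) :=
  stmt5_general t₀ T hT ε Cε Qε Sε hQc hSc Qt z₁ p₁ hz hp hbT hb0
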